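/- Let (T₁, …, Tₙ), n ≥ 2, be a 𝒰ₙ-twisted contraction on a Hilbert space H. Then there exist 2ⁿ pairwise orthogonal subspaces {H_A : A ⊆ {1,…,n}} (possibly trivial), each reducing every T_i, with H = ⊕_{A ⊆ {1,…,n}} H_A, such that for each A with H_A ≠ {0} and each i, the restriction T_i|_{H_A} is unitary if i ∉ A and completely non-unitary if i ∈ A; moreover this decomposition is unique. -/

import Mathlib

open ContinuousLinearMap

variable {H : Type*} [NormedAddCommGroup H] [InnerProductSpace ℂ H] [CompleteSpace H]

/-- A closed subspace `M` reduces the operator `T`. -/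
def Reduces (T : H →L[ℂ] H) (M : Submodule ℂ H) : Prop :=
  (∀ x ∈ M, T x ∈ M) ∧ (∀ x ∈ M, adjoint T x ∈ M)

/-- For a `T`-reducing subspace `M` of the contraction `T`, the restriction `T|_M` is unitary
iff `T` and `T*` are isometric on `M`. -/
def UnitaryOn (T : H →L[ℂ] H) (M : Submodule ℂ H) : Prop :=
  ∀ h ∈ M, ‖T h‖ = ‖h‖ ∧ ‖adjoint T h‖ = ‖h‖

/-- For a `T`-reducing subspace `M`, the restriction `T|_M` is completely non-unitary iff
there is no nonzero `T`-reducing subspace of `M` on which `T` restricts to a unitary. -/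
def CnuOn (T : H →L[ℂ] H) (M : Submodule ℂ H) : Prop :=
  ∀ L : Submodule ℂ H, L ≤ M → Reduces T L → UnitaryOn T L → L = ⊥

/-!
For a contraction `S`, the vectors `x` with `S*ᵏ Sᵏ x = x = Sᵏ S*ᵏ x` for all `k` form the largest
reducing subspace `W S` on which `S` is unitary. If `Tᵢ Tⱼ = U Tⱼ Tᵢ` and `Tᵢ* Tⱼ = U* Tⱼ Tᵢ*` with
`U` unitary and commuting with `Tᵢ`, the twists cancel in `Tᵢ*ᵏ Tᵢᵏ Tⱼ` and `Tᵢᵏ Tᵢ*ᵏ Tⱼ`, so `Tⱼ`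
commutes with these operators and hence `W Tᵢ` reduces every `Tⱼ`. The orthogonal projections onto
the `W Tᵢ` then commute, and the space is the orthogonal sum of the cells
`H_A = ⋂_{i ∈ A} (W Tᵢ)ᗮ ∩ ⋂_{i ∉ A} W Tᵢ`, on which `Tᵢ` is unitary for `i ∉ A` and completely
non-unitary for `i ∈ A`. For uniqueness, any other such decomposition satisfies `K_A ≤ H_A`: by
maximality of `W Tᵢ` for `i ∉ A`, and for `i ∈ A` because the projection onto the closed
`Tᵢ`-reducing subspace `K_A` maps `W Tᵢ` into `K_A ∩ W Tᵢ = 0`. Two orthogonal decompositions of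
the whole space with `K_A ≤ H_A` coincide.
-/

open scoped InnerProductSpace

section Algebra

variable {R : Type*} [Monoid R]

theorem pow_mul_eq_mul_mul_pow_of_twisted {s b v : R} (hsv : Commute s v)
    (h : s * b = v * b * s) (k : ℕ) : s ^ k * b = v ^ k * b * s ^ k := by
  induction k with
  | zero => simp
  | succ k ih =>
    calc s ^ (k + 1) * b = s * (s ^ k * b) := by rw [pow_succ', mul_assoc]
      _ = s * v ^ k * b * s ^ k := by rw [ih]; simp only [mul_assoc]
      _ = v ^ k * (s * b) * s ^ k := by rw [(hsv.pow_right k).eq]; simp only [mul_assoc]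
      _ = v ^ (k + 1) * b * s ^ (k + 1) := by rw [h, pow_succ, pow_succ']; simp only [mul_assoc]

variable [StarMul R]

theorem commute_star_mul_self_of_twisted {s b v : R} (hv : v ∈ unitary R) (hsv : Commute s v)
    (h : s * b = v * b * s) (h' : star s * b = star v * b * star s) :
    Commute b (star s * s) ∧ Commute b (s * star s) := by
  have hsv_star : Commute s (star v) := hsv.units_inv_right (u := Unitary.toUnits ⟨v, hv⟩)
  have hs_star_v : Commute (star s) v := by simpa using hsv_star.star_star
  constructor
  · calc b * (star s * s) = v * star v * b * (star s * s) := by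
          rw [Unitary.mul_star_self_of_mem hv, one_mul]
      _ = v * (star s * b) * s := by rw [h']; simp only [mul_assoc]
      _ = star s * (v * b * s) := by rw [← mul_assoc v, ← hs_star_v.eq]; simp only [mul_assoc]
      _ = star s * s * b := by rw [← h, mul_assoc]
  · calc b * (s * star s) = star v * v * b * (s * star s) := by
          rw [Unitary.star_mul_self_of_mem hv, one_mul]
      _ = star v * (s * b) * star s := by rw [h]; simp only [mul_assoc]
      _ = s * (star v * b * star s) := by
          rw [← mul_assoc (star v), ← hsv_star.eq]; simp only [mul_assoc]
      _ = s * star s * b := by rw [← h', mul_assoc]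

end Algebra

section InnerProductSpace

variable {𝕜 E : Type*} [RCLike 𝕜] [NormedAddCommGroup E] [InnerProductSpace 𝕜 E]

theorem Submodule.IsOrtho.orthogonal_orthogonal_left {U V : Submodule 𝕜 E} (h : U ⟂ V) :
    Uᗮᗮ ⟂ V :=
  Submodule.isOrtho_iff_le.2 (Submodule.orthogonal_le h.ge)

theorem eq_of_le_of_isOrtho_of_iSup_eq_top {ι : Type*} {K L : ι → Submodule 𝕜 E}
    (hKL : ∀ i, K i ≤ L i) (hL : ∀ i j, i ≠ j → L i ⟂ L j) (hK : ⨆ i, K i = ⊤) (i : ι) :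
    K i = L i := by
  refine le_antisymm (hKL i) fun x hx => ?_
  have htop : ⊤ ≤ K i ⊔ (L i)ᗮ := hK ▸ iSup_le fun j => by
    obtain rfl | hji := eq_or_ne j i
    · exact le_sup_left
    · exact ((hKL j).trans (hL j i hji).le).trans le_sup_right
  obtain ⟨a, ha, b, hb, rfl⟩ := Submodule.mem_sup.1 (htop (Submodule.mem_top (x := x)))
  have hbL : b ∈ L i := by simpa using (L i).sub_mem hx (hKL i ha)
  rwa [inner_self_eq_zero.1 (hb b hbL), add_zero]

theorem isClosed_of_isOrtho_of_iSup_eq_top {ι : Type*} {K : ι → Submodule 𝕜 E}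
    (hK : ∀ i j, i ≠ j → K i ⟂ K j) (hsup : ⨆ i, K i = ⊤) (i : ι) : IsClosed (K i : Set E) := by
  rw [eq_of_le_of_isOrtho_of_iSup_eq_top (fun i => (K i).le_orthogonal_orthogonal)
    (fun i j hij => (hK i j hij).orthogonal_orthogonal_left.symm.orthogonal_orthogonal_left.symm)
    hsup i]
  exact Submodule.isClosed_orthogonal _

section StarProjection

variable {U V M : Submodule 𝕜 E} [U.HasOrthogonalProjection] [V.HasOrthogonalProjection]

theorem starProjection_mem_of_commute (h : Commute U.starProjection V.starProjection) {x : E}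
    (hx : x ∈ U) : V.starProjection x ∈ U := by
  rw [← U.starProjection_eq_self_iff.2 hx, ← mul_apply_eq_comp, ← h.eq, mul_apply_eq_comp]
  exact U.starProjection_apply_mem _

theorem starProjection_mem_orthogonal_of_commute (h : Commute U.starProjection V.starProjection)
    {x : E} (hx : x ∈ Uᗮ) : V.starProjection x ∈ Uᗮ := by
  rw [← U.starProjection_apply_eq_zero_iff] at hx ⊢
  rw [← mul_apply_eq_comp, h.eq, mul_apply_eq_comp, hx, map_zero]

theorem le_inf_sup_inf_orthogonal (hM : ∀ x ∈ M, U.starProjection x ∈ M) :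
    M ≤ (M ⊓ U) ⊔ (M ⊓ Uᗮ) := fun x hx =>
  Submodule.mem_sup.2 ⟨_, ⟨hM x hx, U.starProjection_apply_mem x⟩, _,
    ⟨M.sub_mem hx (hM x hx), U.sub_starProjection_mem_orthogonal x⟩, add_sub_cancel _ _⟩

end StarProjection

section OrthCell

variable {ι : Type*} [DecidableEq ι] (W : ι → Submodule 𝕜 E)

/-- With `W i` the unitary part of `Tᵢ`, this is the subspace `H_A` of the decomposition. -/
def orthCell (A : Finset ι) : Submodule 𝕜 E :=
  ⨅ i, if i ∈ A then (W i)ᗮ else W i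

variable {W}

theorem orthCell_le_orthogonal {A : Finset ι} {i : ι} (hi : i ∈ A) : orthCell W A ≤ (W i)ᗮ :=
  iInf_le_of_le i (by rw [if_pos hi])

theorem orthCell_le {A : Finset ι} {i : ι} (hi : i ∉ A) : orthCell W A ≤ W i :=
  iInf_le_of_le i (by rw [if_neg hi])

theorem le_orthCell {A : Finset ι} {M : Submodule 𝕜 E} (h₁ : ∀ i ∈ A, M ≤ (W i)ᗮ)
    (h₂ : ∀ i ∉ A, M ≤ W i) : M ≤ orthCell W A :=
  le_iInf fun i => by split_ifs with hi; exacts [h₁ i hi, h₂ i hi]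

theorem isOrtho_orthCell {A B : Finset ι} (hAB : A ≠ B) : orthCell W A ⟂ orthCell W B := by
  obtain ⟨i, hi⟩ := not_forall.1 (mt Finset.ext hAB)
  by_cases hiA : i ∈ A
  · have hiB : i ∉ B := fun hiB => hi ⟨fun _ => hiB, fun _ => hiA⟩
    exact (Submodule.isOrtho_orthogonal_left (W i)).mono (orthCell_le_orthogonal hiA)
      (orthCell_le hiB)
  · have hiB : i ∈ B := by tauto
    exact (Submodule.isOrtho_orthogonal_right (W i)).mono (orthCell_le hiA)
      (orthCell_le_orthogonal hiB)

theorem iSup_orthCell_eq_top [Fintype ι] [∀ i, (W i).HasOrthogonalProjection]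
    (h : ∀ i j, Commute (W i).starProjection (W j).starProjection) : ⨆ A, orthCell W A = ⊤ := by
  let V (A : Finset ι) (i : ι) := if i ∈ A then (W i)ᗮ else W i
  have hV (j : ι) (A : Finset ι) (i : ι) (x : E) (hx : x ∈ V A i) :
      (W j).starProjection x ∈ V A i := by
    simp only [V] at hx ⊢
    split_ifs at hx ⊢
    exacts [starProjection_mem_orthogonal_of_commute (h i j) hx,
      starProjection_mem_of_commute (h i j) hx]
  suffices ∀ s : Finset ι, ⨆ A, ⨅ i ∈ s, V A i = ⊤ by simpa [orthCell] using this Finset.univ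
  intro s
  induction s using Finset.induction_on with
  | empty => simp
  | @insert j s hj ih =>
    refine eq_top_iff.2 (ih ▸ iSup_le fun A => ?_)
    have hsplit := le_inf_sup_inf_orthogonal (U := W j) (M := ⨅ i ∈ s, V A i) fun x hx => by
      simp only [Submodule.mem_iInf] at hx ⊢
      exact fun i hi => hV j A i x (hx i hi)
    have hcongr (B : Finset ι) (hB : ∀ i ∈ s, i ∈ B ↔ i ∈ A) :
        ⨅ i ∈ s, V B i = ⨅ i ∈ s, V A i :=
      iInf_congr fun i => iInf_congr fun hi => by simp only [V, hB i hi]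
    refine hsplit.trans (sup_le (le_iSup_of_le (A.erase j) ?_) (le_iSup_of_le (insert j A) ?_))
    · rw [Finset.iInf_insert, hcongr (A.erase j) fun i hi =>
        Finset.mem_erase.trans (and_iff_right (ne_of_mem_of_not_mem hi hj))]
      simp [V, inf_comm]
    · rw [Finset.iInf_insert, hcongr (insert j A) fun i hi =>
        Finset.mem_insert.trans (or_iff_right (ne_of_mem_of_not_mem hi hj))]
      simp [V, inf_comm]

end OrthCell

end InnerProductSpace

namespace Reduces

variable {T : H →L[ℂ] H} {M N : Submodule ℂ H}

theorem adjoint (h : Reduces T M) : Reduces (adjoint T) M :=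
  ⟨h.2, by simpa only [adjoint_adjoint] using h.1⟩

theorem orthogonal (h : Reduces T M) : Reduces T Mᗮ := by
  refine ⟨fun x hx y hy => ?_, fun x hx y hy => ?_⟩
  · rw [← adjoint_inner_left]
    exact hx _ (h.2 y hy)
  · rw [adjoint_inner_right]
    exact hx _ (h.1 y hy)

theorem inf (hM : Reduces T M) (hN : Reduces T N) : Reduces T (M ⊓ N) :=
  ⟨fun x hx => ⟨hM.1 x hx.1, hN.1 x hx.2⟩, fun x hx => ⟨hM.2 x hx.1, hN.2 x hx.2⟩⟩

theorem iInf {ι : Sort*} {M : ι → Submodule ℂ H} (h : ∀ i, Reduces T (M i)) :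
    Reduces T (⨅ i, M i) := by
  simp only [Reduces, Submodule.mem_iInf]
  exact ⟨fun x hx i => (h i).1 x (hx i), fun x hx i => (h i).2 x (hx i)⟩

end Reduces

theorem UnitaryOn.mono {T : H →L[ℂ] H} {L M : Submodule ℂ H} (h : UnitaryOn T M) (hLM : L ≤ M) :
    UnitaryOn T L :=
  fun x hx => h x (hLM hx)

theorem reduces_iff_commute_starProjection {T : H →L[ℂ] H} {K : Submodule ℂ H}
    [K.HasOrthogonalProjection] : Reduces T K ↔ Commute K.starProjection T := by
  constructor
  · intro h
    ext x
    show K.starProjection (T x) = T (K.starProjection x)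
    refine K.eq_starProjection_of_mem_orthogonal' (h.1 _ (K.starProjection_apply_mem x))
      (h.orthogonal.1 _ (K.sub_starProjection_mem_orthogonal x)) ?_
    rw [← map_add, add_sub_cancel]
  · intro h
    have h' : Commute K.starProjection (adjoint T) := by
      simpa [star_eq_adjoint, (isSelfAdjoint_starProjection K).star_eq] using h.star_star
    refine ⟨fun x hx => ?_, fun x hx => ?_⟩
    · rw [← K.starProjection_eq_self_iff.2 hx, ← mul_apply_eq_comp, ← h.eq]
      exact K.starProjection_apply_mem _
    · rw [← K.starProjection_eq_self_iff.2 hx, ← mul_apply_eq_comp, ← h'.eq]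
      exact K.starProjection_apply_mem _

theorem Reduces.orthCell {ι : Type*} [DecidableEq ι] {W : ι → Submodule ℂ H} {T : H →L[ℂ] H}
    (h : ∀ i, Reduces T (W i)) (A : Finset ι) : Reduces T (orthCell W A) :=
  Reduces.iInf fun i => by split_ifs; exacts [(h i).orthogonal, h i]

namespace ContinuousLinearMap

theorem adjoint_pow (S : H →L[ℂ] H) (k : ℕ) : adjoint (S ^ k) = adjoint S ^ k :=
  star_pow S k

theorem norm_pow_le_one {𝕜 E : Type*} [NontriviallyNormedField 𝕜] [NormedAddCommGroup E]
    [NormedSpace 𝕜 E] {S : E →L[𝕜] E} (hS : ‖S‖ ≤ 1) (k : ℕ) : ‖S ^ k‖ ≤ 1 := by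
  induction k with
  | zero => exact norm_id_le
  | succ k ih =>
    rw [pow_succ]
    exact (norm_mul_le _ _).trans (mul_le_one₀ ih (norm_nonneg _) hS)

theorem norm_apply_eq_iff_adjoint_mul_self_apply {A : H →L[ℂ] H} (hA : ‖A‖ ≤ 1) (x : H) :
    ‖A x‖ = ‖x‖ ↔ (adjoint A * A) x = x := by
  have hre : RCLike.re ⟪(adjoint A * A) x, x⟫_ℂ = ‖A x‖ ^ 2 := by
    rw [mul_apply_eq_comp, adjoint_inner_left, inner_self_eq_norm_sq (𝕜 := ℂ)]
  constructor
  · intro h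
    have hle : ‖(adjoint A * A) x‖ ≤ ‖A x‖ :=
      (adjoint A).le_of_opNorm_le (by rwa [LinearIsometryEquiv.norm_map]) _ |>.trans_eq
        (one_mul _)
    have hsq : ‖(adjoint A * A) x - x‖ ^ 2 ≤ 0 := by
      rw [norm_sub_sq (𝕜 := ℂ), hre, h]
      nlinarith [norm_nonneg (A x), norm_nonneg ((adjoint A * A) x)]
    rw [← sub_eq_zero, ← norm_eq_zero]
    exact pow_eq_zero_iff two_ne_zero |>.1 (le_antisymm hsq (sq_nonneg _))
  · intro h
    rw [h, inner_self_eq_norm_sq (𝕜 := ℂ)] at hre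
    exact (sq_eq_sq₀ (norm_nonneg _) (norm_nonneg _)).1 hre.symm

end ContinuousLinearMap

/-- For a contraction `S`, the unitary summand of its Sz.-Nagy–Foiaș canonical decomposition. -/
noncomputable def unitarySubspace (S : H →L[ℂ] H) : Submodule ℂ H :=
  ⨅ k : ℕ, LinearMap.ker ((adjoint S ^ k * S ^ k - 1 : H →L[ℂ] H) : H →ₗ[ℂ] H) ⊓
    LinearMap.ker ((S ^ k * adjoint S ^ k - 1 : H →L[ℂ] H) : H →ₗ[ℂ] H)

section UnitarySubspace

variable {S : H →L[ℂ] H} {x : H}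

theorem mem_unitarySubspace :
    x ∈ unitarySubspace S ↔
      ∀ k : ℕ, (adjoint S ^ k * S ^ k) x = x ∧ (S ^ k * adjoint S ^ k) x = x := by
  simp only [unitarySubspace, Submodule.mem_iInf, Submodule.mem_inf, LinearMap.mem_ker, coe_coe,
    sub_apply, one_apply_eq_self, sub_eq_zero]

theorem isClosed_unitarySubspace (S : H →L[ℂ] H) : IsClosed (unitarySubspace S : Set H) := by
  simp only [unitarySubspace, Submodule.coe_iInf, Submodule.coe_inf]
  exact isClosed_iInter fun k => (isClosed_ker _).inter (isClosed_ker _)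

instance (S : H →L[ℂ] H) : (unitarySubspace S).HasOrthogonalProjection :=
  have := (isClosed_unitarySubspace S).completeSpace_coe
  inferInstance

theorem unitarySubspace_adjoint (S : H →L[ℂ] H) :
    unitarySubspace (adjoint S) = unitarySubspace S := by
  ext x
  simp only [mem_unitarySubspace, adjoint_adjoint, and_comm]

theorem mem_unitarySubspace_iff_norm (hS : ‖S‖ ≤ 1) :
    x ∈ unitarySubspace S ↔ ∀ k : ℕ, ‖(S ^ k) x‖ = ‖x‖ ∧ ‖(adjoint S ^ k) x‖ = ‖x‖ := by
  rw [mem_unitarySubspace]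
  refine forall_congr' fun k => ?_
  have hS' : ‖adjoint S‖ ≤ 1 := by rwa [LinearIsometryEquiv.norm_map]
  rw [norm_apply_eq_iff_adjoint_mul_self_apply (norm_pow_le_one hS k),
    norm_apply_eq_iff_adjoint_mul_self_apply (norm_pow_le_one hS' k), adjoint_pow, adjoint_pow,
    adjoint_adjoint]

theorem apply_mem_unitarySubspace (hS : ‖S‖ ≤ 1) (hx : x ∈ unitarySubspace S) :
    S x ∈ unitarySubspace S := by
  rw [mem_unitarySubspace_iff_norm hS] at hx ⊢
  have hSx : ‖S x‖ = ‖x‖ := by simpa using (hx 1).1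
  have hSSx : adjoint S (S x) = x := (norm_apply_eq_iff_adjoint_mul_self_apply hS x).1 hSx
  intro k
  refine ⟨by rw [← mul_apply_eq_comp, ← pow_succ, (hx _).1, hSx], ?_⟩
  cases k with
  | zero => simp
  | succ k => rw [pow_succ, mul_apply_eq_comp, hSSx, (hx k).2, hSx]

theorem reduces_unitarySubspace (hS : ‖S‖ ≤ 1) : Reduces S (unitarySubspace S) := by
  refine ⟨fun x hx => apply_mem_unitarySubspace hS hx, fun x hx => ?_⟩
  rw [← unitarySubspace_adjoint] at hx ⊢
  exact apply_mem_unitarySubspace (by rwa [LinearIsometryEquiv.norm_map]) hx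

theorem unitaryOn_unitarySubspace (hS : ‖S‖ ≤ 1) : UnitaryOn S (unitarySubspace S) :=
  fun x hx => by simpa using (mem_unitarySubspace_iff_norm hS).1 hx 1

theorem le_unitarySubspace (hS : ‖S‖ ≤ 1) {L : Submodule ℂ H} (hL : Reduces S L)
    (hU : UnitaryOn S L) : L ≤ unitarySubspace S := by
  have norm_pow_apply {B : H →L[ℂ] H} (hB : ∀ y ∈ L, B y ∈ L ∧ ‖B y‖ = ‖y‖) (k : ℕ) :
      ∀ y ∈ L, ‖(B ^ k) y‖ = ‖y‖ := by
    induction k with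
    | zero => simp
    | succ k ih =>
      intro y hy
      rw [pow_succ, mul_apply_eq_comp, ih _ (hB y hy).1, (hB y hy).2]
  intro x hx
  rw [mem_unitarySubspace_iff_norm hS]
  exact fun k => ⟨norm_pow_apply (fun y hy => ⟨hL.1 y hy, (hU y hy).1⟩) k x hx,
    norm_pow_apply (fun y hy => ⟨hL.2 y hy, (hU y hy).2⟩) k x hx⟩

theorem reduces_unitarySubspace_of_forall_commute {B : H →L[ℂ] H}
    (h₁ : ∀ k : ℕ, Commute B (adjoint S ^ k * S ^ k))
    (h₂ : ∀ k : ℕ, Commute B (S ^ k * adjoint S ^ k)) : Reduces B (unitarySubspace S) := by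
  have mapsTo {C : H →L[ℂ] H} (hC₁ : ∀ k : ℕ, Commute C (adjoint S ^ k * S ^ k))
      (hC₂ : ∀ k : ℕ, Commute C (S ^ k * adjoint S ^ k)) (x : H) (hx : x ∈ unitarySubspace S) :
      C x ∈ unitarySubspace S := by
    rw [mem_unitarySubspace] at hx ⊢
    intro k
    rw [← mul_apply_eq_comp _ C, ← (hC₁ k).eq, mul_apply_eq_comp, (hx k).1,
      ← mul_apply_eq_comp _ C, ← (hC₂ k).eq, mul_apply_eq_comp, (hx k).2]
    exact ⟨rfl, rfl⟩
  have hsa₁ (k : ℕ) : IsSelfAdjoint (adjoint S ^ k * S ^ k) := by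
    simpa only [star_pow, star_eq_adjoint] using IsSelfAdjoint.star_mul_self (S ^ k)
  have hsa₂ (k : ℕ) : IsSelfAdjoint (S ^ k * adjoint S ^ k) := by
    simpa only [star_pow, star_eq_adjoint] using IsSelfAdjoint.mul_star_self (S ^ k)
  refine ⟨mapsTo h₁ h₂, mapsTo (fun k => ?_) (fun k => ?_)⟩
  · simpa only [(hsa₁ k).star_eq, star_eq_adjoint] using (h₁ k).star_star
  · simpa only [(hsa₂ k).star_eq, star_eq_adjoint] using (h₂ k).star_star

theorem reduces_unitarySubspace_of_commute {B : H →L[ℂ] H} (h : Commute B S)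
    (h' : Commute B (adjoint S)) : Reduces B (unitarySubspace S) :=
  reduces_unitarySubspace_of_forall_commute (fun k => (h'.pow_right k).mul_right (h.pow_right k))
    (fun k => (h.pow_right k).mul_right (h'.pow_right k))

theorem reduces_unitarySubspace_of_twisted {B V : H →L[ℂ] H} (hV : V ∈ unitary (H →L[ℂ] H))
    (hSV : Commute S V) (h : S * B = V * B * S) (h' : adjoint S * B = adjoint V * B * adjoint S) :
    Reduces B (unitarySubspace S) := by
  have key (k : ℕ) := commute_star_mul_self_of_twisted (pow_mem hV k) (hSV.pow_pow k k)
    (pow_mul_eq_mul_mul_pow_of_twisted hSV h k)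
    (by simpa only [star_pow] using pow_mul_eq_mul_mul_pow_of_twisted hSV.star_star h' k)
  exact reduces_unitarySubspace_of_forall_commute
    (fun k => by simpa only [star_pow, star_eq_adjoint] using (key k).1)
    (fun k => by simpa only [star_pow, star_eq_adjoint] using (key k).2)

theorem cnuOn_of_le_orthogonal (hS : ‖S‖ ≤ 1) {M : Submodule ℂ H}
    (hM : M ≤ (unitarySubspace S)ᗮ) : CnuOn S M := fun _ hLM hL hU =>
  eq_bot_iff.2 <| (le_inf (le_unitarySubspace hS hL hU) (hLM.trans hM)).trans
    (Submodule.inf_orthogonal_eq_bot _).le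

theorem isOrtho_unitarySubspace_of_cnuOn (hS : ‖S‖ ≤ 1) {K : Submodule ℂ H}
    [K.HasOrthogonalProjection] (hK : Reduces S K) (hcnu : CnuOn S K) : K ⟂ unitarySubspace S := by
  have hP : Reduces K.starProjection (unitarySubspace S) :=
    reduces_unitarySubspace_of_commute (reduces_iff_commute_starProjection.1 hK)
      (reduces_iff_commute_starProjection.1 hK.adjoint)
  have hbot : K ⊓ unitarySubspace S = ⊥ := hcnu _ inf_le_left (hK.inf (reduces_unitarySubspace hS))
    ((unitaryOn_unitarySubspace hS).mono inf_le_right)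
  refine (Submodule.isOrtho_iff_le.2 fun w hw => ?_).symm
  rw [← K.starProjection_apply_eq_zero_iff, ← Submodule.mem_bot ℂ, ← hbot]
  exact ⟨K.starProjection_apply_mem w, hP.1 w hw⟩

end UnitarySubspace

theorem stmt19_general (n : ℕ)
    (T : Fin n → (H →L[ℂ] H)) (U : Fin n → Fin n → (H →L[ℂ] H))
    (hUunit : ∀ i j, i ≠ j → adjoint (U i j) ∘L U i j = 1 ∧ U i j ∘L adjoint (U i j) = 1)
    (hTcon : ∀ i, ∀ h : H, ‖T i h‖ ≤ ‖h‖)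
    (htw1 : ∀ i j, i ≠ j → T i ∘L T j = U i j ∘L (T j ∘L T i))
    (htw2 : ∀ i j, i ≠ j → adjoint (T i) ∘L T j = adjoint (U i j) ∘L (T j ∘L adjoint (T i)))
    (htw3 : ∀ k i j, i ≠ j → T k ∘L U i j = U i j ∘L T k) :
    ∃ Hsp : Finset (Fin n) → Submodule ℂ H,
      (∀ A B, A ≠ B → Submodule.IsOrtho (Hsp A) (Hsp B)) ∧
      (⨆ A : Finset (Fin n), Hsp A) = ⊤ ∧
      (∀ A, ∀ i, Reduces (T i) (Hsp A)) ∧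
      (∀ A, ∀ i, i ∉ A → UnitaryOn (T i) (Hsp A)) ∧
      (∀ A, ∀ i, i ∈ A → CnuOn (T i) (Hsp A)) ∧
      -- uniqueness
      (∀ K : Finset (Fin n) → Submodule ℂ H,
        (∀ A B, A ≠ B → Submodule.IsOrtho (K A) (K B)) →
        (⨆ A : Finset (Fin n), K A) = ⊤ →
        (∀ A, ∀ i, Reduces (T i) (K A)) →
        (∀ A, ∀ i, i ∉ A → UnitaryOn (T i) (K A)) →
        (∀ A, ∀ i, i ∈ A → CnuOn (T i) (K A)) →
        ∀ A, K A = Hsp A) := by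
  have hT (i : Fin n) : ‖T i‖ ≤ 1 := opNorm_le_bound _ zero_le_one fun x => by simpa using hTcon i x
  let W (i : Fin n) := unitarySubspace (T i)
  have hW (i j : Fin n) : Reduces (T j) (W i) := by
    obtain rfl | hij := eq_or_ne i j
    · exact reduces_unitarySubspace (hT i)
    · exact reduces_unitarySubspace_of_twisted (Unitary.mem_iff.2 (hUunit i j hij))
        (htw3 i i j hij) (by rw [mul_assoc]; exact htw1 i j hij)
        (by rw [mul_assoc]; exact htw2 i j hij)
  have hP (i j : Fin n) : Commute (W i).starProjection (W j).starProjection :=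
    reduces_iff_commute_starProjection.1 <| reduces_unitarySubspace_of_commute
      (reduces_iff_commute_starProjection.1 (hW j i))
      (reduces_iff_commute_starProjection.1 (hW j i).adjoint)
  refine ⟨orthCell W, fun _ _ => isOrtho_orthCell, iSup_orthCell_eq_top hP,
    fun A i => Reduces.orthCell (fun j => hW j i) A,
    fun A i hi => (unitaryOn_unitarySubspace (hT i)).mono (orthCell_le hi),
    fun A i hi => cnuOn_of_le_orthogonal (hT i) (orthCell_le_orthogonal hi), ?_⟩
  intro K hKortho hKsup hKred hKuni hKcnu
  refine eq_of_le_of_isOrtho_of_iSup_eq_top (fun B => le_orthCell (fun i hi => ?_)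
      (fun i hi => le_unitarySubspace (hT i) (hKred B i) (hKuni B i hi)))
    (fun _ _ => isOrtho_orthCell) hKsup
  have := (isClosed_of_isOrtho_of_iSup_eq_top hKortho hKsup B).completeSpace_coe
  exact (isOrtho_unitarySubspace_of_cnuOn (hT i) (hKred B i) (hKcnu B i hi)).le

theorem stmt19 (n : ℕ) (hn : 2 ≤ n)
    (T : Fin n → (H →L[ℂ] H)) (U : Fin n → Fin n → (H →L[ℂ] H))
    (hUunit : ∀ i j, i ≠ j → adjoint (U i j) ∘L U i j = 1 ∧ U i j ∘L adjoint (U i j) = 1)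
    (hUadj : ∀ i j, i ≠ j → U j i = adjoint (U i j))
    (hUcomm : ∀ i j k l, Commute (U i j) (U k l))
    (hTcon : ∀ i, ∀ h : H, ‖T i h‖ ≤ ‖h‖)
    (htw1 : ∀ i j, i ≠ j → T i ∘L T j = U i j ∘L (T j ∘L T i))
    (htw2 : ∀ i j, i ≠ j → adjoint (T i) ∘L T j = adjoint (U i j) ∘L (T j ∘L adjoint (T i)))
    (htw3 : ∀ k i j, i ≠ j → T k ∘L U i j = U i j ∘L T k) :
    ∃ Hsp : Finset (Fin n) → Submodule ℂ H,
      (∀ A B, A ≠ B → Submodule.IsOrtho (Hsp A) (Hsp B)) ∧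
      (⨆ A : Finset (Fin n), Hsp A) = ⊤ ∧
      (∀ A, ∀ i, Reduces (T i) (Hsp A)) ∧
      (∀ A, ∀ i, i ∉ A → UnitaryOn (T i) (Hsp A)) ∧
      (∀ A, ∀ i, i ∈ A → CnuOn (T i) (Hsp A)) ∧
      -- uniqueness
      (∀ K : Finset (Fin n) → Submodule ℂ H,
        (∀ A B, A ≠ B → Submodule.IsOrtho (K A) (K B)) →
        (⨆ A : Finset (Fin n), K A) = ⊤ →
        (∀ A, ∀ i, Reduces (T i) (K A)) →
        (∀ A, ∀ i, i ∉ A → UnitaryOn (T i) (K A)) →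
        (∀ A, ∀ i, i ∈ A → CnuOn (T i) (K A)) →
        ∀ A, K A = Hsp A) :=
  stmt19_general n T U hUunit hTcon htw1 htw2 htw3
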